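/- Let P ≪ Q be probability measures with β₁ = (ess sup dP/dQ)⁻¹ ∈ (0,1) and β₂ = ess inf dP/dQ ∈ [0,1). Then D(P‖Q) ≤ (1/2)·(φ(1/β₁) − φ(β₂))·|P−Q| (in nats), where φ(t) = t·ln(t)/(t−1) for t ∈ (0,1)∪(1,∞), φ(0) = 0, and φ(1) = 1. -/

import Mathlib

/-!
Write `g = dP/dQ`, `m = β₂` and `M = 1/β₁`, so that `g ∈ [m, M]` `Q`-a.e. and
`D(P‖Q) = ∫ g log g dQ`. The function `t ↦ t log t` is convex and vanishes at `1`, so on `[1, M]`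
it lies below the chord `φ(M) (t - 1)` and on `[m, 1]` below the chord `φ(m) (t - 1)`. Hence
`g log g ≤ (φ(M) - φ(m))/2 · |g - 1| + (φ(M) + φ(m))/2 · (g - 1)`, and the last term integrates
to zero because `∫ g dQ = 1`.
-/

open MeasureTheory Set

theorem ConvexOn.sub_le_slope_mul_abs_add {𝕜 : Type*} [Field 𝕜] [LinearOrder 𝕜]
    [IsStrictOrderedRing 𝕜] {s : Set 𝕜} {f : 𝕜 → 𝕜} (hf : ConvexOn 𝕜 s f) {a m M t : 𝕜}
    (ha : a ∈ s) (hm : m ∈ s) (hM : M ∈ s) (hma : m < a) (haM : a < M) (ht : t ∈ Icc m M) :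
    f t - f a ≤ (slope f a M - slope f a m) / 2 * |t - a|
      + (slope f a M + slope f a m) / 2 * (t - a) := by
  have hts : t ∈ s := hf.1.ordConnected.out hm hM ht
  have hchord : f t - f a = slope f a t * (t - a) := by
    rw [mul_comm, ← smul_eq_mul, sub_smul_slope, vsub_eq_sub]
  rcases lt_trichotomy t a with hta | rfl | hat
  · have hslope : slope f a m ≤ slope f a t :=
      hf.slope_mono ha ⟨hm, hma.ne⟩ ⟨hts, hta.ne⟩ ht.1
    rw [hchord, abs_of_neg (sub_neg.2 hta)]
    nlinarith
  · simp
  · have hslope : slope f a t ≤ slope f a M :=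
      hf.slope_mono ha ⟨hts, hat.ne'⟩ ⟨hM, haM.ne'⟩ ht.2
    rw [hchord, abs_of_pos (sub_pos.2 hat)]
    nlinarith

theorem ae_toReal_mem_Icc_essInf_essSup {α : Type*} [MeasurableSpace α] {μ : Measure α}
    {f : α → ENNReal} (hf : essSup f μ ≠ ⊤) :
    ∀ᵐ x ∂μ, (f x).toReal ∈ Icc (essInf f μ).toReal (essSup f μ).toReal := by
  filter_upwards [ae_essInf_le (f := f), ENNReal.ae_le_essSup f] with x hinf hsup
  exact ⟨ENNReal.toReal_mono (ne_top_of_le_ne_top hf hsup) hinf, ENNReal.toReal_mono hf hsup⟩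

theorem integrable_comp_of_ae_mem_isCompact {α X E : Type*} [MeasurableSpace α] {μ : Measure α}
    [IsFiniteMeasure μ] [TopologicalSpace X] [NormedAddCommGroup E] {F : X → E} {g : α → X}
    {K : Set X} (hF : Continuous F) (hg : AEStronglyMeasurable g μ) (hK : IsCompact K)
    (hgK : ∀ᵐ x ∂μ, g x ∈ K) : Integrable (fun x => F (g x)) μ := by
  obtain ⟨C, hC⟩ := hK.exists_bound_of_continuousOn hF.continuousOn
  exact .of_bound (hF.comp_aestronglyMeasurable hg) C (hgK.mono fun x hx => hC _ hx)

theorem integral_le_mul_integral_abs_of_integral_eq_zero {α : Type*} [MeasurableSpace α]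
    {μ : Measure α} {f h : α → ℝ} {c d : ℝ} (hf : Integrable f μ) (hf0 : ∫ x, f x ∂μ = 0)
    (hh : Integrable h μ) (hle : ∀ᵐ x ∂μ, h x ≤ c * |f x| + d * f x) :
    ∫ x, h x ∂μ ≤ c * ∫ x, |f x| ∂μ := by
  calc ∫ x, h x ∂μ ≤ ∫ x, (c * |f x| + d * f x) ∂μ :=
        integral_mono_ae hh ((hf.abs.const_mul c).add (hf.const_mul d)) hle
    _ = c * ∫ x, |f x| ∂μ := by
        rw [integral_add (hf.abs.const_mul c) (hf.const_mul d), integral_const_mul,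
          integral_const_mul, hf0, mul_zero, add_zero]

theorem integral_toReal_rnDeriv_sub_one {α : Type*} [MeasurableSpace α] {P Q : Measure α}
    [IsProbabilityMeasure P] [IsProbabilityMeasure Q] (hPQ : P ≪ Q) :
    ∫ x, ((P.rnDeriv Q x).toReal - 1) ∂Q = 0 := by
  rw [integral_sub Measure.integrable_toReal_rnDeriv (integrable_const 1),
    Measure.integral_toReal_rnDeriv hPQ]
  simp

theorem eq_slope_mul_log_of_nonneg {φ : ℝ → ℝ} (hφ0 : φ 0 = 0)
    (hφ : ∀ t : ℝ, 0 < t → t ≠ 1 → φ t = t * Real.log t / (t - 1)) {t : ℝ} (ht0 : 0 ≤ t)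
    (ht1 : t ≠ 1) : φ t = slope (fun t => t * Real.log t) 1 t := by
  rw [slope_def_field, Real.log_one, mul_zero, sub_zero]
  rcases ht0.eq_or_lt with rfl | ht0
  · simp [hφ0]
  · exact hφ t ht0 ht1

theorem reverse_Pinsker_phi_general {α : Type*} [MeasurableSpace α] (P Q : Measure α)
    [IsProbabilityMeasure P] [IsProbabilityMeasure Q] (hPQ : P ≪ Q)
    (hM : 1 < essSup (P.rnDeriv Q) Q) (hM' : essSup (P.rnDeriv Q) Q ≠ ⊤)
    (hm : essInf (P.rnDeriv Q) Q < 1)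
    (φ : ℝ → ℝ) (hφ0 : φ 0 = 0)
    (hφ : ∀ t : ℝ, 0 < t → t ≠ 1 → φ t = t * Real.log t / (t - 1)) :
    ∫ x, Real.log ((P.rnDeriv Q x).toReal) ∂P
      ≤ (1/2) * (φ ((essSup (P.rnDeriv Q) Q).toReal) - φ ((essInf (P.rnDeriv Q) Q).toReal))
        * ∫ x, |(P.rnDeriv Q x).toReal - 1| ∂Q := by
  set g : α → ℝ := fun x => (P.rnDeriv Q x).toReal
  set M := (essSup (P.rnDeriv Q) Q).toReal
  set m := (essInf (P.rnDeriv Q) Q).toReal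
  have hM1 : 1 < M := by simpa using ENNReal.toReal_strict_mono hM' hM
  have hm1 : m < 1 := by simpa using ENNReal.toReal_strict_mono ENNReal.one_ne_top hm
  have hm0 : 0 ≤ m := ENNReal.toReal_nonneg
  have hgIcc : ∀ᵐ x ∂Q, g x ∈ Icc m M := ae_toReal_mem_Icc_essInf_essSup hM'
  have hpt : ∀ᵐ x ∂Q, g x * Real.log (g x)
      ≤ (φ M - φ m) / 2 * |g x - 1| + (φ M + φ m) / 2 * (g x - 1) := by
    filter_upwards [hgIcc] with x hx
    rw [eq_slope_mul_log_of_nonneg hφ0 hφ (by linarith) hM1.ne',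
      eq_slope_mul_log_of_nonneg hφ0 hφ hm0 hm1.ne]
    simpa using Real.convexOn_mul_log.sub_le_slope_mul_abs_add (mem_Ici.2 zero_le_one)
      (mem_Ici.2 hm0) (mem_Ici.2 (by linarith)) hm1 hM1 hx
  have hg_log_int : Integrable (fun x => g x * Real.log (g x)) Q :=
    integrable_comp_of_ae_mem_isCompact Real.continuous_mul_log
      (Measure.measurable_rnDeriv P Q).ennreal_toReal.aestronglyMeasurable isCompact_Icc hgIcc
  calc ∫ x, Real.log (g x) ∂P = ∫ x, g x * Real.log (g x) ∂Q :=
        (integral_toReal_rnDeriv_mul hPQ).symm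
    _ ≤ (φ M - φ m) / 2 * ∫ x, |g x - 1| ∂Q :=
        integral_le_mul_integral_abs_of_integral_eq_zero
          (Measure.integrable_toReal_rnDeriv.sub (integrable_const 1))
          (integral_toReal_rnDeriv_sub_one hPQ) hg_log_int hpt
    _ = 1 / 2 * (φ M - φ m) * ∫ x, |g x - 1| ∂Q := by ring

theorem reverse_Pinsker_phi {α : Type*} [MeasurableSpace α] (P Q : Measure α)
    [IsProbabilityMeasure P] [IsProbabilityMeasure Q] (hPQ : P ≪ Q)
    (hM : 1 < essSup (P.rnDeriv Q) Q) (hM' : essSup (P.rnDeriv Q) Q ≠ ⊤)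
    (hm : essInf (P.rnDeriv Q) Q < 1)
    (φ : ℝ → ℝ) (hφ0 : φ 0 = 0) (hφ1 : φ 1 = 1)
    (hφ : ∀ t : ℝ, 0 < t → t ≠ 1 → φ t = t * Real.log t / (t - 1)) :
    ∫ x, Real.log ((P.rnDeriv Q x).toReal) ∂P
      ≤ (1/2) * (φ ((essSup (P.rnDeriv Q) Q).toReal) - φ ((essInf (P.rnDeriv Q) Q).toReal))
        * ∫ x, |(P.rnDeriv Q x).toReal - 1| ∂Q :=
  reverse_Pinsker_phi_general P Q hPQ hM hM' hm φ hφ0 hφ
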